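/- arXiv:2105.14694 — 5 statements merged into one kernel-verified Lean document; each statement's English description precedes it below -/
import Mathlib

section
/- Let g_1,…,g_n be nonzero vectors in ℝ^d, Z = ∑_{i=1}^n ‖g_i‖₂, and m = (1/n)∑_{i=1}^n g_i. Define the SGD covariance Σ¹ = (1/n)∑_{i=1}^n g_i g_iᵀ − m mᵀ and the RR covariance Σ² = (Z/n²)∑_{i=1}^n g_i g_iᵀ/‖g_i‖₂ − m mᵀ. Then Tr(Σ²) = (1/n² )(∑_{i=1}^n ‖g_i‖₂)² − ‖m‖₂² ≤ (1/n)∑_{i=1}^n ‖g_i‖₂² − ‖m‖₂² = Tr(Σ¹); i.e. the trace of the RR covariance is at most the trace of the SGD covariance. -/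
/-! Since `Tr (v vᵀ) = ‖v‖²`, both traces are computed termwise; the reweighting makes the `i`-th
term of `Tr Σ²` equal to `‖g i‖⁻¹ ‖g i‖² = ‖g i‖`, so `Tr Σ² + ‖m‖²` is the squared mean of the
norms and `Tr Σ¹ + ‖m‖²` their mean square, and the comparison is Cauchy–Schwarz. -/

open Matrix Finset

theorem EuclideanSpace.trace_vecMulVec_self {ι : Type*} [Fintype ι] (v : EuclideanSpace ℝ ι) :
    (vecMulVec v v).trace = ‖v‖ ^ 2 := by
  rw [trace_vecMulVec, ← real_inner_self_eq_norm_sq, EuclideanSpace.inner_eq_star_dotProduct,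
    star_trivial]

theorem one_div_card_sq_mul_sq_sum_le {ι : Type*} (s : Finset ι) (f : ι → ℝ) :
    1 / (#s : ℝ) ^ 2 * (∑ i ∈ s, f i) ^ 2 ≤ 1 / (#s : ℝ) * ∑ i ∈ s, f i ^ 2 := by
  simpa only [div_pow, one_div_mul_eq_div] using
    sum_div_card_sq_le_sum_sq_div_card (s := s) (f := f)

theorem rr_covariance_trace_le_sgd_general {d n : ℕ}
    (g : Fin n → EuclideanSpace ℝ (Fin d))
    (Z : ℝ) (m : EuclideanSpace ℝ (Fin d))
    (hZ : Z = ∑ i, ‖g i‖)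
    (Sigma1 Sigma2 : Matrix (Fin d) (Fin d) ℝ)
    (hSigma1 : Sigma1 = (1 / (n : ℝ)) • ∑ i, vecMulVec (g i) (g i) - vecMulVec m m)
    (hSigma2 : Sigma2 = (Z / (n : ℝ) ^ 2) •
        ∑ i, (‖g i‖)⁻¹ • vecMulVec (g i) (g i) - vecMulVec m m) :
    Sigma2.trace = (1 / (n : ℝ) ^ 2) * (∑ i, ‖g i‖) ^ 2 - ‖m‖ ^ 2 ∧
    (1 / (n : ℝ) ^ 2) * (∑ i, ‖g i‖) ^ 2 - ‖m‖ ^ 2 ≤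
      (1 / (n : ℝ)) * ∑ i, ‖g i‖ ^ 2 - ‖m‖ ^ 2 ∧
    Sigma1.trace = (1 / (n : ℝ)) * ∑ i, ‖g i‖ ^ 2 - ‖m‖ ^ 2 ∧
    Sigma2.trace ≤ Sigma1.trace := by
  have reweight (i : Fin n) : ‖g i‖⁻¹ * ‖g i‖ ^ 2 = ‖g i‖ := by
    rw [sq, ← mul_assoc, inv_mul_mul_self]
  have hrr : Sigma2.trace = (1 / (n : ℝ) ^ 2) * (∑ i, ‖g i‖) ^ 2 - ‖m‖ ^ 2 := by
    simp only [hSigma2, hZ, trace_sub, trace_smul, trace_sum, smul_eq_mul,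
      EuclideanSpace.trace_vecMulVec_self, reweight]
    ring
  have hsgd : Sigma1.trace = (1 / (n : ℝ)) * ∑ i, ‖g i‖ ^ 2 - ‖m‖ ^ 2 := by
    simp only [hSigma1, trace_sub, trace_smul, trace_sum, smul_eq_mul,
      EuclideanSpace.trace_vecMulVec_self]
  have hcs := one_div_card_sq_mul_sq_sum_le univ fun i => ‖g i‖
  rw [card_univ, Fintype.card_fin] at hcs
  have hle := sub_le_sub_right hcs (‖m‖ ^ 2)
  exact ⟨hrr, hle, hsgd, hrr ▸ hsgd ▸ hle⟩

/-- the trace of the RR covariance matrix is at most the trace of the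
SGD covariance matrix: with `Σ¹ = (1/n)∑ g i g iᵀ − m mᵀ` and
`Σ² = (Z/n²)∑ g i g iᵀ/‖g i‖ − m mᵀ`, we have
`Tr(Σ²) = (1/n²)(∑ ‖g i‖)² − ‖m‖² ≤ (1/n)∑ ‖g i‖² − ‖m‖² = Tr(Σ¹)`. -/
theorem rr_covariance_trace_le_sgd {d n : ℕ} (hn : 0 < n)
    (g : Fin n → EuclideanSpace ℝ (Fin d)) (hg : ∀ i, g i ≠ 0)
    (Z : ℝ) (m : EuclideanSpace ℝ (Fin d))
    (hZ : Z = ∑ i, ‖g i‖) (hm : m = (1 / (n : ℝ)) • ∑ i, g i)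
    (Sigma1 Sigma2 : Matrix (Fin d) (Fin d) ℝ)
    (hSigma1 : Sigma1 = (1 / (n : ℝ)) • ∑ i, vecMulVec (g i) (g i) - vecMulVec m m)
    (hSigma2 : Sigma2 = (Z / (n : ℝ) ^ 2) •
        ∑ i, (‖g i‖)⁻¹ • vecMulVec (g i) (g i) - vecMulVec m m) :
    Sigma2.trace = (1 / (n : ℝ) ^ 2) * (∑ i, ‖g i‖) ^ 2 - ‖m‖ ^ 2 ∧
    (1 / (n : ℝ) ^ 2) * (∑ i, ‖g i‖) ^ 2 - ‖m‖ ^ 2 ≤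
      (1 / (n : ℝ)) * ∑ i, ‖g i‖ ^ 2 - ‖m‖ ^ 2 ∧
    Sigma1.trace = (1 / (n : ℝ)) * ∑ i, ‖g i‖ ^ 2 - ‖m‖ ^ 2 ∧
    Sigma2.trace ≤ Sigma1.trace :=
  rr_covariance_trace_le_sgd_general g Z m hZ Sigma1 Sigma2 hSigma1 hSigma2
end

section
/- Let α, γ > 0, p ∈ (1/2, 1), m ≥ 0, σ² ≥ 0, and let (a_k)_{k≥1} be a sequence of nonnegative real numbers satisfying a_{k+1} ≤ (1 − 2αγ/(k+m)^p) a_k + γ²σ²/(k+m)^{2p} for all k large enough that 2αγ/(k+m)^p < 1. Then limsup_{k→∞} k^p·a_k ≤ γσ²/(2α); in particular a_k ≤ γσ²/(2α k^p) + o(1/k^p). -/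
/-!
Multiply the recursion by `(k + m) ^ p`. Since `((k + 1 + m) / (k + m)) ^ p ≤ 1 + 1 / (k + m)` and
`1 / (k + m) = o((k + m) ^ (-p))` for `p < 1`, the rescaled sequence `u k = (k + m) ^ p * a k`
satisfies, for every `c > γσ²/(2α)` and some `β > 0`, eventually
`u (k + 1) ≤ (1 - η k) * u k + η k * c` with `η k = β / (k + m) ^ p`. As `∑ η k = ∞`, the excess
`max (u k - c) 0` is crushed by `∏ (1 - η k) ≤ exp (-∑ η k) → 0`, so `limsup u ≤ c`.
-/

open Filter Asymptotics Topology Finset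

lemma tendsto_zero_of_le_one_sub_mul {w η : ℕ → ℝ} (hw : ∀ k, 0 ≤ w k) (hη : ∀ k, 0 ≤ η k)
    (hdiv : ¬ Summable η) (hrec : ∀ k, w (k + 1) ≤ (1 - η k) * w k) :
    Tendsto w atTop (𝓝 0) := by
  have hbound : ∀ n, w n ≤ w 0 * Real.exp (-∑ k ∈ range n, η k) := by
    intro n
    induction n with
    | zero => simp
    | succ n ih =>
      calc w (n + 1) ≤ (1 - η n) * w n := hrec n
        _ ≤ Real.exp (-η n) * w n := by
          gcongr
          · exact hw n
          · linarith [Real.add_one_le_exp (-η n)]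
        _ ≤ Real.exp (-η n) * (w 0 * Real.exp (-∑ k ∈ range n, η k)) := by gcongr
        _ = w 0 * Real.exp (-∑ k ∈ range (n + 1), η k) := by
          rw [sum_range_succ, neg_add, Real.exp_add]; ring
  have hsum := (not_summable_iff_tendsto_nat_atTop_of_nonneg hη).1 hdiv
  have hlim : Tendsto (fun n => w 0 * Real.exp (-∑ k ∈ range n, η k)) atTop (𝓝 0) := by
    simpa using (Real.tendsto_exp_neg_atTop_nhds_zero.comp hsum).const_mul (w 0)
  exact squeeze_zero hw hbound hlim

lemma tendsto_max_sub_of_le_one_sub_mul_add {u η : ℕ → ℝ} {c : ℝ}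
    (hη : ∀ᶠ k in atTop, 0 ≤ η k ∧ η k ≤ 1) (hdiv : ¬ Summable η)
    (hrec : ∀ᶠ k in atTop, u (k + 1) ≤ (1 - η k) * u k + η k * c) :
    Tendsto (fun k => max (u k - c) 0) atTop (𝓝 0) := by
  obtain ⟨K, hK⟩ := eventually_atTop.1 (hη.and hrec)
  rw [← tendsto_add_atTop_iff_nat K]
  refine tendsto_zero_of_le_one_sub_mul (η := fun j => η (j + K)) (fun _ => le_max_right _ _)
    (fun j => (hK (j + K) (by omega)).1.1) ((summable_nat_add_iff K).not.2 hdiv) fun j => ?_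
  obtain ⟨⟨-, hη1⟩, hu⟩ := hK (j + K) (by omega)
  rw [Nat.add_right_comm]
  refine max_le ?_ (mul_nonneg (by linarith) (le_max_right _ _))
  calc u (j + K + 1) - c ≤ (1 - η (j + K)) * (u (j + K) - c) := by linarith
    _ ≤ (1 - η (j + K)) * max (u (j + K) - c) 0 :=
      mul_le_mul_of_nonneg_left (le_max_left _ _) (by linarith)

lemma rpow_add_one_le {x p : ℝ} (hx : 0 < x) (hp : p ≤ 1) :
    (x + 1) ^ p ≤ (1 + 1 / x) * x ^ p := by
  have h1 : 1 ≤ 1 + 1 / x := by simp only [le_add_iff_nonneg_right]; positivity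
  calc (x + 1) ^ p = (1 + 1 / x) ^ p * x ^ p := by
        rw [← Real.mul_rpow (by positivity) hx.le]; field_simp
    _ ≤ (1 + 1 / x) ^ (1 : ℝ) * x ^ p := by gcongr
    _ = (1 + 1 / x) * x ^ p := by rw [Real.rpow_one]

/-- Read with `q = x ^ p` and `q' = (x + 1) ^ p`. -/
lemma scaled_step_le {b s β c x q q' A A' : ℝ} (hx : 0 < x) (hq : 0 < q)
    (hq' : q' ≤ (1 + 1 / x) * q) (hA : 0 ≤ A) (hA' : 0 ≤ A') (hb : 0 ≤ b)
    (hgap : q / x ≤ b - β) (hs : s / x ≤ β * c - s)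
    (hrec : A' ≤ (1 - b / q) * A + s / q ^ 2) :
    q' * A' ≤ (1 - β / q) * (q * A) + β / q * c := by
  have hb' : 0 ≤ b / x := by positivity
  calc q' * A' ≤ (1 + 1 / x) * q * A' := by gcongr
    _ ≤ (1 + 1 / x) * q * ((1 - b / q) * A + s / q ^ 2) := by gcongr
    _ = (q - b + q / x - b / x) * A + (s + s / x) / q := by field_simp; ring
    _ ≤ (q - β) * A + β * c / q :=
      add_le_add (mul_le_mul_of_nonneg_right (by linarith) hA)
        (div_le_div_of_nonneg_right (by linarith) hq.le)
    _ = (1 - β / q) * (q * A) + β / q * c := by field_simp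

section Recursion

variable {α γ m σ2 p : ℝ} {a : ℕ → ℝ}

lemma eventually_scaled_recursion (hα : 0 < α) (hγ : 0 < γ) (hp0 : 0 < p) (hp1 : p < 1)
    (hσ2 : 0 ≤ σ2) (ha : ∀ k, 0 ≤ a k)
    (hrec : ∀ k : ℕ, 2 * α * γ / ((k : ℝ) + m) ^ p < 1 →
      a (k + 1) ≤ (1 - 2 * α * γ / ((k : ℝ) + m) ^ p) * a k +
        γ ^ 2 * σ2 / ((k : ℝ) + m) ^ (2 * p))
    {c : ℝ} (hc : γ * σ2 / (2 * α) < c) :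
    ∃ β > 0, ∀ᶠ k : ℕ in atTop, β / ((k : ℝ) + m) ^ p ≤ 1 ∧
      (((k + 1 : ℕ) : ℝ) + m) ^ p * a (k + 1) ≤
        (1 - β / ((k : ℝ) + m) ^ p) * (((k : ℝ) + m) ^ p * a k) +
          β / ((k : ℝ) + m) ^ p * c := by
  have hc0 : 0 < c := lt_of_le_of_lt (by positivity) hc
  have hsc : γ ^ 2 * σ2 / c < 2 * α * γ := by
    rw [div_lt_iff₀ hc0]
    rw [div_lt_iff₀ (by positivity)] at hc
    nlinarith
  obtain ⟨β, hβs, hβb⟩ := exists_between hsc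
  have hβ : 0 < β := lt_of_le_of_lt (by positivity) hβs
  have hβc : 0 < β * c - γ ^ 2 * σ2 := by rw [div_lt_iff₀ hc0] at hβs; linarith
  refine ⟨β, hβ, ?_⟩
  have hx : Tendsto (fun k : ℕ => (k : ℝ) + m) atTop atTop :=
    tendsto_atTop_add_const_right _ m tendsto_natCast_atTop_atTop
  have hq : Tendsto (fun k : ℕ => ((k : ℝ) + m) ^ p) atTop atTop :=
    (tendsto_rpow_atTop hp0).comp hx
  -- `x ^ p / x = x ^ (-(1 - p))` tends to zero because `p < 1`.
  have hgap : Tendsto (fun k : ℕ => ((k : ℝ) + m) ^ p / ((k : ℝ) + m)) atTop (𝓝 0) := by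
    refine ((tendsto_rpow_neg_atTop (by linarith : 0 < 1 - p)).comp hx).congr' ?_
    filter_upwards [hx.eventually_gt_atTop 0] with k hk
    simp only [Function.comp_apply, neg_sub, Real.rpow_sub_one hk.ne']
  have hsx : Tendsto (fun k : ℕ => γ ^ 2 * σ2 / ((k : ℝ) + m)) atTop (𝓝 0) :=
    tendsto_const_nhds.div_atTop hx
  filter_upwards [hx.eventually_gt_atTop 0, hq.eventually_gt_atTop (2 * α * γ),
    hq.eventually_ge_atTop β, hgap.eventually_lt_const (sub_pos.2 hβb),
    hsx.eventually_lt_const hβc] with k hx0 hqb hqβ hg hs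
  have hq0 : 0 < ((k : ℝ) + m) ^ p := by linarith
  refine ⟨(div_le_one hq0).2 hqβ, ?_⟩
  rw [Nat.cast_succ, add_right_comm]
  refine scaled_step_le hx0 hq0 (rpow_add_one_le hx0 hp1.le) (ha k) (ha (k + 1))
    (by positivity) hg.le hs.le ?_
  have hstep := hrec k ((div_lt_one hq0).2 hqb)
  rwa [mul_comm 2 p, Real.rpow_mul hx0.le, Real.rpow_two] at hstep

lemma eventually_rpow_mul_le (hα : 0 < α) (hγ : 0 < γ) (hp0 : 0 < p) (hp1 : p < 1)
    (hm : 0 ≤ m) (hσ2 : 0 ≤ σ2) (ha : ∀ k, 0 ≤ a k)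
    (hrec : ∀ k : ℕ, 2 * α * γ / ((k : ℝ) + m) ^ p < 1 →
      a (k + 1) ≤ (1 - 2 * α * γ / ((k : ℝ) + m) ^ p) * a k +
        γ ^ 2 * σ2 / ((k : ℝ) + m) ^ (2 * p))
    {c : ℝ} (hc : γ * σ2 / (2 * α) < c) :
    ∀ᶠ k : ℕ in atTop, (k : ℝ) ^ p * a k ≤ c := by
  obtain ⟨c', hLc', hc'c⟩ := exists_between hc
  obtain ⟨β, hβ, hev⟩ := eventually_scaled_recursion hα hγ hp0 hp1 hσ2 ha hrec hLc'
  have hdiv : ¬ Summable fun k : ℕ => β / ((k : ℝ) + m) ^ p := by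
    simp_rw [← mul_one_div β, summable_mul_left_iff hβ.ne']
    refine fun h => (Real.summable_one_div_nat_add_rpow m p).not.2 (by linarith) ?_
    exact h.congr fun k => by rw [abs_of_nonneg (by positivity)]
  have hlim := tendsto_max_sub_of_le_one_sub_mul_add (u := fun k : ℕ => ((k : ℝ) + m) ^ p * a k)
    (hev.mono fun k hk => ⟨by positivity, hk.1⟩) hdiv (hev.mono fun k hk => hk.2)
  filter_upwards [hlim.eventually_lt_const (show 0 < c - c' by linarith)] with k hk
  calc (k : ℝ) ^ p * a k ≤ ((k : ℝ) + m) ^ p * a k := by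
        gcongr
        · exact ha k
        · linarith
    _ ≤ c := by linarith [le_max_left (((k : ℝ) + m) ^ p * a k - c') 0]

end Recursion

lemma isLittleO_max_sub_div {f w : ℕ → ℝ} {L : ℝ} (hw : ∀ᶠ k in atTop, 0 < w k)
    (h : ∀ c > L, ∀ᶠ k in atTop, w k * f k ≤ c) :
    (fun k => max (f k - L / w k) 0) =o[atTop] fun k => 1 / w k := by
  refine IsLittleO.of_bound fun ε hε => ?_
  filter_upwards [hw, h (L + ε) (by linarith)] with k hwk hk
  rw [Real.norm_of_nonneg (le_max_right _ _), Real.norm_of_nonneg (by positivity)]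
  refine max_le ?_ (by positivity)
  rw [sub_le_iff_le_add, mul_one_div, ← add_div, le_div_iff₀ hwk, mul_comm]
  linarith

/-- deterministic recursion lemma for the step-size schedule
`η k = γ/(k+m)^p` with `1/2 < p < 1`. If
`a (k+1) ≤ (1 − 2αγ/(k+m)^p) a k + γ²σ²/(k+m)^{2p}` whenever `2αγ/(k+m)^p < 1`,
then `limsup k^p·a k ≤ γσ²/(2α)`; in particular `a k ≤ γσ²/(2α k^p) + o(1/k^p)`. -/
theorem recursion_rate_p_lt_one (α γ m σ2 p : ℝ) (hα : 0 < α) (hγ : 0 < γ)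
    (hp : p ∈ Set.Ioo (1 / 2 : ℝ) 1) (hm : 0 ≤ m) (hσ2 : 0 ≤ σ2)
    (a : ℕ → ℝ) (ha : ∀ k, 0 ≤ a k)
    (hrec : ∀ k : ℕ, 2 * α * γ / ((k : ℝ) + m) ^ p < 1 →
      a (k + 1) ≤ (1 - 2 * α * γ / ((k : ℝ) + m) ^ p) * a k +
        γ ^ 2 * σ2 / ((k : ℝ) + m) ^ (2 * p)) :
    limsup (fun k : ℕ => (k : ℝ) ^ p * a k) atTop ≤ γ * σ2 / (2 * α) ∧
    ∃ e : ℕ → ℝ, (e =o[atTop] fun k : ℕ => 1 / (k : ℝ) ^ p) ∧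
      ∀ k : ℕ, 1 ≤ k → a k ≤ γ * σ2 / (2 * α * (k : ℝ) ^ p) + e k := by
  obtain ⟨hp0, hp1⟩ := hp
  have key : ∀ c > γ * σ2 / (2 * α), ∀ᶠ k : ℕ in atTop, (k : ℝ) ^ p * a k ≤ c :=
    fun c hc => eventually_rpow_mul_le hα hγ (by linarith) hp1 hm hσ2 ha hrec hc
  refine ⟨le_of_forall_gt_imp_ge_of_dense fun c hc =>
      limsup_le_of_le (isCoboundedUnder_le_of_le atTop fun k => by positivity [ha k]) (key c hc),
    fun k => max (a k - γ * σ2 / (2 * α) / (k : ℝ) ^ p) 0, ?_, fun k _ => ?_⟩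
  · refine isLittleO_max_sub_div ?_ key
    filter_upwards [eventually_ge_atTop 1] with k hk
    have : (1 : ℝ) ≤ k := by exact_mod_cast hk
    positivity
  · rw [← div_div]
    linarith [le_max_left (a k - γ * σ2 / (2 * α) / (k : ℝ) ^ p) 0]
end

section
/- Let H_1,…,H_n be symmetric positive semidefinite matrices in ℝ^{d×d}, H = (1/n)∑_{i=1}^n H_i, and let v ∈ ℝ^d be such that H_i v ≠ 0 for all i. Define sampling probabilities p_i = ‖H_i v‖₂ / (∑_{j=1}^n ‖H_j v‖₂) and weights G̃_i = ((1/n)∑_{j=1}^n ‖H_j v‖₂)/‖H_i v‖₂. Then for every η > 0, the second moment of the linearized RR update satisfies ∑_{i=1}^n p_i ‖(I − η G̃_i H_i)v‖₂² = vᵀ(I − ηH)² v + η²( ((1/n)∑_{i=1}^n ‖H_i v‖₂)² − ‖Hv‖₂² ). In particular, ∑_{i=1}^n p_i G̃_i H_i v = Hv, so the linearized RR step has the same mean as the linearized SGD step. -/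
open Matrix

/-- Reinterpret a plain vector `Fin d → ℝ` as an element of `EuclideanSpace ℝ (Fin d)`,
so that `‖·‖` denotes the Euclidean (ℓ²) norm. -/
noncomputable def toEucl {d : ℕ} (x : Fin d → ℝ) : EuclideanSpace ℝ (Fin d) :=
  (WithLp.equiv 2 (Fin d → ℝ)).symm x

/-!
The RR scheme is importance sampling: `p i * G̃ i = 1 / n` for every `i`, so the reweighted step
has the mean of the uniformly sampled one, while `G̃ i * ‖H i v‖` equals the mean gradient norm
`m = (1/n) ∑ ‖H j v‖` for every `i`. Expanding `‖v - η G̃ i H i v‖²`, the linear term therefore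
averages to that of `‖v - η H v‖²` and the quadratic term is the constant `η² m²` instead of
`η² ‖H v‖²`, which is the claimed identity.
-/

section ImportanceSampling

variable {ι E : Type*} [Fintype ι] [NormedAddCommGroup E]

noncomputable def rrProb (w : ι → E) (i : ι) : ℝ :=
  ‖w i‖ / ∑ j, ‖w j‖

noncomputable def rrWeight (w : ι → E) (i : ι) : ℝ :=
  ((1 / (Fintype.card ι : ℝ)) * ∑ j, ‖w j‖) / ‖w i‖

lemma sum_norm_pos {w : ι → E} {i : ι} (hw : w i ≠ 0) : 0 < ∑ j, ‖w j‖ :=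
  lt_of_lt_of_le (norm_pos_iff.mpr hw)
    (Finset.single_le_sum (fun j _ => norm_nonneg (w j)) (Finset.mem_univ i))

lemma rrProb_mul_rrWeight {w : ι → E} {i : ι} (hw : w i ≠ 0) :
    rrProb w i * rrWeight w i = 1 / Fintype.card ι := by
  have := (sum_norm_pos hw).ne'
  have := norm_ne_zero_iff.mpr hw
  simp only [rrProb, rrWeight]
  field_simp

lemma rrWeight_mul_norm {w : ι → E} {i : ι} (hw : w i ≠ 0) :
    rrWeight w i * ‖w i‖ = (1 / (Fintype.card ι : ℝ)) * ∑ j, ‖w j‖ :=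
  div_mul_cancel₀ _ (norm_ne_zero_iff.mpr hw)

lemma sum_rrProb [Nonempty ι] {w : ι → E} (hw : ∀ i, w i ≠ 0) : ∑ i, rrProb w i = 1 := by
  simp only [rrProb]
  rw [← Finset.sum_div, div_self (sum_norm_pos (hw (Classical.arbitrary ι))).ne']

lemma sum_rrProb_smul_rrWeight_smul {M : Type*} [AddCommGroup M] [Module ℝ M]
    {w : ι → E} (hw : ∀ i, w i ≠ 0) (x : ι → M) :
    ∑ i, rrProb w i • rrWeight w i • x i = (1 / (Fintype.card ι : ℝ)) • ∑ i, x i := by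
  rw [Finset.smul_sum]
  exact Finset.sum_congr rfl fun i _ => by rw [smul_smul, rrProb_mul_rrWeight (hw i)]

theorem sum_rrProb_mul_norm_sub_rrWeight_smul_sq [InnerProductSpace ℝ E] [Nonempty ι] {w : ι → E}
    (hw : ∀ i, w i ≠ 0) (v : E) (η : ℝ) :
    ∑ i, rrProb w i * ‖v - (η * rrWeight w i) • w i‖ ^ 2 =
      ‖v - η • (1 / (Fintype.card ι : ℝ)) • ∑ i, w i‖ ^ 2 +
        η ^ 2 * (((1 / (Fintype.card ι : ℝ)) * ∑ i, ‖w i‖) ^ 2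
          - ‖(1 / (Fintype.card ι : ℝ)) • ∑ i, w i‖ ^ 2) := by
  set c : ℝ := 1 / (Fintype.card ι : ℝ)
  set m : ℝ := c * ∑ i, ‖w i‖
  have hterm : ∀ i, rrProb w i * ‖v - (η * rrWeight w i) • w i‖ ^ 2 =
      rrProb w i * (‖v‖ ^ 2 + η ^ 2 * m ^ 2) - 2 * η * c * inner ℝ v (w i) := by
    intro i
    rw [norm_sub_sq_real, inner_smul_right, norm_smul, mul_pow,
      Real.norm_eq_abs, sq_abs]
    linear_combination (-2 * η * inner ℝ v (w i)) * rrProb_mul_rrWeight (hw i) +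
      η ^ 2 * rrProb w i * (rrWeight w i * ‖w i‖ + m) * rrWeight_mul_norm (hw i)
  calc ∑ i, rrProb w i * ‖v - (η * rrWeight w i) • w i‖ ^ 2
      = ∑ i, (rrProb w i * (‖v‖ ^ 2 + η ^ 2 * m ^ 2) - 2 * η * c * inner ℝ v (w i)) :=
        Finset.sum_congr rfl fun i _ => hterm i
    _ = ‖v‖ ^ 2 + η ^ 2 * m ^ 2 - 2 * η * inner ℝ v (c • ∑ i, w i) := by
        rw [Finset.sum_sub_distrib, ← Finset.sum_mul, sum_rrProb hw, ← Finset.mul_sum,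
          inner_smul_right, inner_sum]
        ring
    _ = _ := by
        rw [norm_sub_sq_real, norm_smul, Real.norm_eq_abs, mul_pow |η|, sq_abs]
        simp only [inner_smul_right]
        ring

end ImportanceSampling

lemma Matrix.isSymm_sum {ι n α : Type*} [AddCommMonoid α] {s : Finset ι}
    {A : ι → Matrix n n α} (h : ∀ i ∈ s, (A i).IsSymm) : (∑ i ∈ s, A i).IsSymm :=
  Finset.sum_induction _ IsSymm (fun _ _ => IsSymm.add) isSymm_zero h

lemma Matrix.IsSymm.dotProduct_sq_mulVec {n α : Type*} [Fintype n] [DecidableEq n]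
    [CommSemiring α] {A : Matrix n n α} (hA : A.IsSymm) (v : n → α) :
    v ⬝ᵥ (A ^ 2 *ᵥ v) = (A *ᵥ v) ⬝ᵥ (A *ᵥ v) := by
  rw [sq, ← mulVec_mulVec, dotProduct_mulVec, ← mulVec_transpose, hA.eq]

lemma norm_toEucl_sq {d : ℕ} (x : Fin d → ℝ) : ‖toEucl x‖ ^ 2 = x ⬝ᵥ x := by
  rw [← real_inner_self_eq_norm_sq, EuclideanSpace.inner_eq_star_dotProduct]
  simp [toEucl]

theorem rr_linearized_second_moment_general {d n : ℕ} (hn : 0 < n)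
    (H : Fin n → Matrix (Fin d) (Fin d) ℝ)
    (hsymm : ∀ i, (H i).IsSymm)
    (Hbar : Matrix (Fin d) (Fin d) ℝ) (hHbar : Hbar = (1 / (n : ℝ)) • ∑ i, H i)
    (v : EuclideanSpace ℝ (Fin d)) (hv : ∀ i, H i *ᵥ v ≠ 0)
    (p G : Fin n → ℝ)
    (hp : ∀ i, p i = ‖toEucl (H i *ᵥ v)‖ / ∑ j, ‖toEucl (H j *ᵥ v)‖)
    (hG : ∀ i, G i = ((1 / (n : ℝ)) * ∑ j, ‖toEucl (H j *ᵥ v)‖) / ‖toEucl (H i *ᵥ v)‖)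
    (η : ℝ) :
    (∑ i, p i * ‖toEucl ((1 - η • (G i • H i)) *ᵥ v)‖ ^ 2 =
      v ⬝ᵥ ((1 - η • Hbar) ^ 2 *ᵥ v) +
        η ^ 2 * (((1 / (n : ℝ)) * ∑ i, ‖toEucl (H i *ᵥ v)‖) ^ 2
          - ‖toEucl (Hbar *ᵥ v)‖ ^ 2)) ∧
    (∑ i, p i • (G i • (H i *ᵥ v)) = Hbar *ᵥ v) := by
  have : Nonempty (Fin n) := ⟨⟨0, hn⟩⟩
  set w : Fin n → EuclideanSpace ℝ (Fin d) := fun i => toEucl (H i *ᵥ v)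
  have hw : ∀ i, w i ≠ 0 := fun i => by simpa [w, toEucl] using hv i
  obtain rfl : p = rrProb w := funext hp
  obtain rfl : G = rrWeight w := funext fun i => by rw [hG, rrWeight, Fintype.card_fin]
  have hHbar_v : Hbar *ᵥ v = (1 / (n : ℝ)) • ∑ i, H i *ᵥ v := by
    rw [hHbar, smul_mulVec, sum_mulVec]
  have hHbar_symm : Hbar.IsSymm := hHbar ▸ (isSymm_sum fun i _ => hsymm i).smul _
  have hstep : ∀ i, toEucl ((1 - η • (rrWeight w i • H i)) *ᵥ v) = v - (η * rrWeight w i) • w i :=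
    fun i => by simp [w, toEucl, sub_mulVec, smul_mulVec, smul_smul]
  have hquad : v ⬝ᵥ ((1 - η • Hbar) ^ 2 *ᵥ v) = ‖v - η • toEucl (Hbar *ᵥ v)‖ ^ 2 := by
    rw [(isSymm_one.sub (hHbar_symm.smul η)).dotProduct_sq_mulVec, ← norm_toEucl_sq]
    simp [toEucl, sub_mulVec, smul_mulVec]
  constructor
  · have hwbar : toEucl (Hbar *ᵥ v) = (1 / (n : ℝ)) • ∑ i, w i := by
      simp [hHbar_v, toEucl, w]
    simp only [hstep, hquad, hwbar]
    simpa using sum_rrProb_mul_norm_sub_rrWeight_smul_sq hw v η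
  · simpa [hHbar_v] using sum_rrProb_smul_rrWeight_smul hw fun i => H i *ᵥ v

/-- second moment of the linearized RR update. With sampling
probabilities `p i = ‖H i v‖/∑ j ‖H j v‖` and weights
`G̃ i = ((1/n)∑ j ‖H j v‖)/‖H i v‖`,
`∑ i p i ‖(I − η G̃ i H i)v‖² = vᵀ(I − ηH)²v + η²(((1/n)∑ ‖H i v‖)² − ‖Hv‖²)`,
and in particular the linearized RR step is unbiased: `∑ i p i G̃ i H i v = Hv`. -/
theorem rr_linearized_second_moment {d n : ℕ} (hn : 0 < n)
    (H : Fin n → Matrix (Fin d) (Fin d) ℝ)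
    (hsymm : ∀ i, (H i).IsSymm) (hpsd : ∀ i, (H i).PosSemidef)
    (Hbar : Matrix (Fin d) (Fin d) ℝ) (hHbar : Hbar = (1 / (n : ℝ)) • ∑ i, H i)
    (v : EuclideanSpace ℝ (Fin d)) (hv : ∀ i, H i *ᵥ v ≠ 0)
    (p G : Fin n → ℝ)
    (hp : ∀ i, p i = ‖toEucl (H i *ᵥ v)‖ / ∑ j, ‖toEucl (H j *ᵥ v)‖)
    (hG : ∀ i, G i = ((1 / (n : ℝ)) * ∑ j, ‖toEucl (H j *ᵥ v)‖) / ‖toEucl (H i *ᵥ v)‖)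
    (η : ℝ) (hη : 0 < η) :
    (∑ i, p i * ‖toEucl ((1 - η • (G i • H i)) *ᵥ v)‖ ^ 2 =
      v ⬝ᵥ ((1 - η • Hbar) ^ 2 *ᵥ v) +
        η ^ 2 * (((1 / (n : ℝ)) * ∑ i, ‖toEucl (H i *ᵥ v)‖) ^ 2
          - ‖toEucl (Hbar *ᵥ v)‖ ^ 2)) ∧
    (∑ i, p i • (G i • (H i *ᵥ v)) = Hbar *ᵥ v) :=
  rr_linearized_second_moment_general hn H hsymm Hbar hHbar v hv p G hp hG η
end

section
/- Let g_1,…,g_n ∈ ℝ^d, H_i = g_i g_iᵀ, H = (1/n)∑_{i=1}^n H_i, η > 0, and let M = (I − ηH)² + η²( (1/n)∑_{i=1}^n H_i² − H² ), a symmetric matrix, with λ = λ_max(M) its largest eigenvalue. Consider the random iteration θ_{k+1} = θ_k − η H_{i_k}(θ_k − θ*), where (i_k)_{k≥0} are i.i.d. uniform on {1,…,n} and θ_0, θ* ∈ ℝ^d are fixed. Then for every k ≥ 0, E[‖θ_k − θ*‖₂²] ≤ λ^k ‖θ_0 − θ*‖₂². In particular, if λ ≤ 1, then E[‖θ_k −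 θ*‖₂²] ≤ ‖θ_0 − θ*‖₂² for all k, i.e. the iteration is stochastically stable around θ*. -/
open Matrix

/-- The random iteration driven by a sequence of sampled indices: `iterIdx step k s x`
applies `step (s 0)`, then `step (s 1)`, ..., then `step (s (k-1))` to `x`. -/
def iterIdx {n : ℕ} {E : Type*} (step : Fin n → E → E) :
    ∀ k : ℕ, (Fin k → Fin n) → E → E
  | 0, _, x => x
  | k + 1, s, x => iterIdx step k (fun j => s j.succ) (step (s 0) x)

open scoped InnerProductSpace

/-!
The error `θ_k − θ*` is driven by the random symmetric matrices `B_i = 1 − η H_i`, and `M` is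
exactly the average of the `B_i²` (the variance of `B_i` is `η²` times that of `H_i`). Hence one
step contracts the mean square error by `⟪e, M e⟫ ≤ λ ‖e‖²`; conditioning on the first index and
inducting on `k` gives `λ^k`, where `λ ≥ 0` since `M`, an average of squares, is positive
semidefinite.
-/

section iterIdx

variable {n : ℕ} {E F : Type*}

theorem iterIdx_semiconj (φ : E → F) {f : Fin n → E → E} {g : Fin n → F → F}
    (h : ∀ i x, φ (f i x) = g i (φ x)) :
    ∀ (k : ℕ) (s : Fin k → Fin n) (x : E), φ (iterIdx f k s x) = iterIdx g k s (φ x)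
  | 0, _, _ => rfl
  | k + 1, s, x => by rw [iterIdx, iterIdx, iterIdx_semiconj φ h k, h]

theorem sum_iterIdx_succ {β : Type*} [AddCommMonoid β] (step : Fin n → E → E) (V : E → β)
    (k : ℕ) (x : E) :
    ∑ s : Fin (k + 1) → Fin n, V (iterIdx step (k + 1) s x) =
      ∑ i, ∑ s : Fin k → Fin n, V (iterIdx step k s (step i x)) := by
  rw [← Fintype.sum_prod_type']
  exact Fintype.sum_equiv (Fin.consEquiv fun _ => Fin n).symm _ _ fun _ => rfl

theorem average_iterIdx_le_pow (step : Fin n → E → E) (V : E → ℝ) {c : ℝ} (hc : 0 ≤ c)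
    (hstep : ∀ x, (1 / (n : ℝ)) * ∑ i, V (step i x) ≤ c * V x) :
    ∀ (k : ℕ) (x : E),
      (1 / (n : ℝ) ^ k) * ∑ s : Fin k → Fin n, V (iterIdx step k s x) ≤ c ^ k * V x
  | 0, x => by simp [iterIdx]
  | k + 1, x => calc
      (1 / (n : ℝ) ^ (k + 1)) * ∑ s : Fin (k + 1) → Fin n, V (iterIdx step (k + 1) s x)
        = (1 / (n : ℝ)) * ∑ i, (1 / (n : ℝ) ^ k) *
            ∑ s : Fin k → Fin n, V (iterIdx step k s (step i x)) := by
          rw [sum_iterIdx_succ, ← Finset.mul_sum, pow_succ]; ring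
      _ ≤ (1 / (n : ℝ)) * ∑ i, c ^ k * V (step i x) := by
          refine mul_le_mul_of_nonneg_left (Finset.sum_le_sum fun i _ => ?_) (by positivity)
          exact average_iterIdx_le_pow step V hc hstep k _
      _ = c ^ k * ((1 / (n : ℝ)) * ∑ i, V (step i x)) := by rw [← Finset.mul_sum]; ring
      _ ≤ c ^ k * (c * V x) := mul_le_mul_of_nonneg_left (hstep x) (pow_nonneg hc k)
      _ = c ^ (k + 1) * V x := by ring

end iterIdx

namespace Matrix.IsHermitian

variable {ι : Type*} [Fintype ι] [DecidableEq ι] {A : Matrix ι ι ℝ}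

theorem norm_toEuclideanLin_sq (hA : A.IsHermitian) (x : EuclideanSpace ℝ ι) :
    ‖toEuclideanLin A x‖ ^ 2 = ⟪x, toEuclideanLin (A ^ 2) x⟫_ℝ := by
  rw [← real_inner_self_eq_norm_sq, isSymmetric_toEuclideanLin_iff.mpr hA, sq, toLpLin_mul_same,
    LinearMap.comp_apply]

variable (hA : A.IsHermitian)

theorem toEuclideanLin_eigenvectorBasis (j : ι) :
    toEuclideanLin A (hA.eigenvectorBasis j) = hA.eigenvalues j • hA.eigenvectorBasis j := by
  simpa [toLpLin_apply] using congrArg (WithLp.toLp 2) (hA.mulVec_eigenvectorBasis j)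

theorem eigenvalues_eq_inner (j : ι) :
    hA.eigenvalues j = ⟪hA.eigenvectorBasis j, toEuclideanLin A (hA.eigenvectorBasis j)⟫_ℝ := by
  rw [hA.toEuclideanLin_eigenvectorBasis, real_inner_smul_right,
    real_inner_self_eq_norm_sq, hA.eigenvectorBasis.orthonormal.1 j, one_pow, mul_one]

theorem inner_toEuclideanLin_le {c : ℝ} (hc : ∀ j, hA.eigenvalues j ≤ c)
    (x : EuclideanSpace ℝ ι) : ⟪x, toEuclideanLin A x⟫_ℝ ≤ c * ‖x‖ ^ 2 := by
  set b := hA.eigenvectorBasis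
  have hsymm := isSymmetric_toEuclideanLin_iff.mpr hA
  calc ⟪x, toEuclideanLin A x⟫_ℝ = ∑ j, hA.eigenvalues j * ⟪x, b j⟫_ℝ ^ 2 := by
        rw [← b.sum_inner_mul_inner]
        refine Finset.sum_congr rfl fun j _ => ?_
        rw [← hsymm, hA.toEuclideanLin_eigenvectorBasis, real_inner_smul_left,
          real_inner_comm x]
        ring
    _ ≤ ∑ j, c * ⟪x, b j⟫_ℝ ^ 2 := by gcongr with j; exact hc j
    _ = c * ‖x‖ ^ 2 := by
        rw [← Finset.mul_sum, ← real_inner_self_eq_norm_sq, ← b.sum_inner_mul_inner]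
        simp_rw [real_inner_comm x, sq]

end Matrix.IsHermitian

theorem sum_norm_toEuclideanLin_sq {ι κ : Type*} [Fintype ι] [DecidableEq ι] [Fintype κ]
    {B : κ → Matrix ι ι ℝ} (hB : ∀ i, (B i).IsHermitian) (x : EuclideanSpace ℝ ι) :
    ∑ i, ‖toEuclideanLin (B i) x‖ ^ 2 = ⟪x, toEuclideanLin (∑ i, B i ^ 2) x⟫_ℝ := by
  simp only [(hB _).norm_toEuclideanLin_sq, map_sum, LinearMap.sum_apply, inner_sum]

theorem average_sq_one_sub_smul {𝕜 A : Type*} [Field 𝕜] [Ring A] [Algebra 𝕜 A] {n : ℕ}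
    (hn : (n : 𝕜) ≠ 0) (H : Fin n → A) (η : 𝕜) :
    (1 / (n : 𝕜)) • ∑ i, (1 - η • H i) ^ 2 =
      (1 - η • ((1 / (n : 𝕜)) • ∑ i, H i)) ^ 2 +
        η ^ 2 • ((1 / (n : 𝕜)) • ∑ i, H i ^ 2 - ((1 / (n : 𝕜)) • ∑ i, H i) ^ 2) := by
  have hsq : ∀ X : A, (1 - η • X) ^ 2 = 1 - (2 * η) • X + η ^ 2 • X ^ 2 := fun X => by
    simp only [sq, sub_mul, mul_sub, one_mul, mul_one, smul_mul_smul_comm, two_mul, add_smul]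
    abel
  simp only [hsq, Finset.sum_add_distrib, Finset.sum_sub_distrib, ← Finset.smul_sum,
    Finset.sum_const, Finset.card_univ, Fintype.card_fin]
  rw [← Nat.cast_smul_eq_nsmul 𝕜, smul_add, smul_sub, smul_smul, one_div_mul_cancel hn, one_smul]
  module

theorem sgd_linearized_stability_general {d n : ℕ} (hn : 0 < n)
    (g : Fin n → EuclideanSpace ℝ (Fin d))
    (H : Fin n → Matrix (Fin d) (Fin d) ℝ)
    (hH : ∀ i, H i = vecMulVec (g i) (g i))
    (Hbar : Matrix (Fin d) (Fin d) ℝ) (hHbar : Hbar = (1 / (n : ℝ)) • ∑ i, H i)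
    (η : ℝ)
    (M : Matrix (Fin d) (Fin d) ℝ)
    (hMdef : M = (1 - η • Hbar) ^ 2 +
      η ^ 2 • ((1 / (n : ℝ)) • ∑ i, (H i) ^ 2 - Hbar ^ 2))
    (hM : M.IsHermitian)
    (lam : ℝ) (hlam : IsGreatest (Set.range hM.eigenvalues) lam)
    (θ0 θs : EuclideanSpace ℝ (Fin d)) :
    (∀ k : ℕ,
      (1 / (n : ℝ) ^ k) * ∑ s : Fin k → Fin n,
          ‖iterIdx (fun i (x : EuclideanSpace ℝ (Fin d)) => x - η • toEucl (H i *ᵥ (x - θs))) k s θ0 - θs‖ ^ 2 ≤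
        lam ^ k * ‖θ0 - θs‖ ^ 2) ∧
    (lam ≤ 1 → ∀ k : ℕ,
      (1 / (n : ℝ) ^ k) * ∑ s : Fin k → Fin n,
          ‖iterIdx (fun i (x : EuclideanSpace ℝ (Fin d)) => x - η • toEucl (H i *ᵥ (x - θs))) k s θ0 - θs‖ ^ 2 ≤
        ‖θ0 - θs‖ ^ 2) := by
  set B : Fin n → Matrix (Fin d) (Fin d) ℝ := fun i => 1 - η • H i
  have hB : ∀ i, (B i).IsHermitian := fun i => isHermitian_one.sub <| by
    rw [hH i, ← star_trivial (g i).ofLp]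
    exact (posSemidef_vecMulVec_self_star _).isHermitian.smul (IsSelfAdjoint.all η)
  have hMB : M = (1 / (n : ℝ)) • ∑ i, B i ^ 2 := by
    rw [hMdef, hHbar, average_sq_one_sub_smul (by positivity)]
  have hquad : ∀ e, (1 / (n : ℝ)) * ∑ i, ‖toEuclideanLin (B i) e‖ ^ 2 =
      ⟪e, toEuclideanLin M e⟫_ℝ := fun e => by
    rw [sum_norm_toEuclideanLin_sq hB, hMB, map_smul, LinearMap.smul_apply, inner_smul_right]
  have hlam_nonneg : 0 ≤ lam := by
    obtain ⟨j, rfl⟩ := hlam.1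
    rw [hM.eigenvalues_eq_inner, ← hquad]
    positivity
  have hcontract : ∀ e, (1 / (n : ℝ)) * ∑ i, ‖toEuclideanLin (B i) e‖ ^ 2 ≤ lam * ‖e‖ ^ 2 :=
    fun e => hquad e ▸ hM.inner_toEuclideanLin_le (fun j => hlam.2 ⟨j, rfl⟩) e
  have herror : ∀ k s, iterIdx (fun i (x : EuclideanSpace ℝ (Fin d)) =>
      x - η • toEucl (H i *ᵥ (x - θs))) k s θ0 - θs =
        iterIdx (fun i => toEuclideanLin (B i)) k s (θ0 - θs) :=
    fun k s => iterIdx_semiconj (· - θs) (fun i x => by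
      simp [B, toEucl, toLpLin_apply, sub_right_comm]) k s θ0
  have hbound : ∀ k : ℕ, (1 / (n : ℝ) ^ k) * ∑ s : Fin k → Fin n,
      ‖iterIdx (fun i (x : EuclideanSpace ℝ (Fin d)) => x - η • toEucl (H i *ᵥ (x - θs)))
        k s θ0 - θs‖ ^ 2 ≤ lam ^ k * ‖θ0 - θs‖ ^ 2 := fun k => by
    simp only [herror]
    exact average_iterIdx_le_pow _ (‖·‖ ^ 2) hlam_nonneg hcontract k _
  exact ⟨hbound, fun hle k => (hbound k).trans <|
    mul_le_of_le_one_left (sq_nonneg _) (pow_le_one₀ hlam_nonneg hle)⟩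

/-- linearized SGD stability. For the iteration
`θ_{k+1} = θ_k − η H_{i_k}(θ_k − θ*)` with `i_k` i.i.d. uniform on `{1,…,n}`
(the expectation over the indices being the uniform average over all index
sequences `s : Fin k → Fin n`), with `H i = g i g iᵀ`,
`M = (I − ηH)² + η²((1/n)∑ H i² − H²)` symmetric and `λ = λ_max(M)`, we have
`E[‖θ_k − θ*‖²] ≤ λ^k ‖θ_0 − θ*‖²`; in particular if `λ ≤ 1` the iteration is
stochastically stable around `θ*`. -/
theorem sgd_linearized_stability {d n : ℕ} (hd : 0 < d) (hn : 0 < n)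
    (g : Fin n → EuclideanSpace ℝ (Fin d))
    (H : Fin n → Matrix (Fin d) (Fin d) ℝ)
    (hH : ∀ i, H i = vecMulVec (g i) (g i))
    (Hbar : Matrix (Fin d) (Fin d) ℝ) (hHbar : Hbar = (1 / (n : ℝ)) • ∑ i, H i)
    (η : ℝ) (hη : 0 < η)
    (M : Matrix (Fin d) (Fin d) ℝ)
    (hMdef : M = (1 - η • Hbar) ^ 2 +
      η ^ 2 • ((1 / (n : ℝ)) • ∑ i, (H i) ^ 2 - Hbar ^ 2))
    (hM : M.IsHermitian)
    (lam : ℝ) (hlam : IsGreatest (Set.range hM.eigenvalues) lam)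
    (θ0 θs : EuclideanSpace ℝ (Fin d)) :
    (∀ k : ℕ,
      (1 / (n : ℝ) ^ k) * ∑ s : Fin k → Fin n,
          ‖iterIdx (fun i (x : EuclideanSpace ℝ (Fin d)) => x - η • toEucl (H i *ᵥ (x - θs))) k s θ0 - θs‖ ^ 2 ≤
        lam ^ k * ‖θ0 - θs‖ ^ 2) ∧
    (lam ≤ 1 → ∀ k : ℕ,
      (1 / (n : ℝ) ^ k) * ∑ s : Fin k → Fin n,
          ‖iterIdx (fun i (x : EuclideanSpace ℝ (Fin d)) => x - η • toEucl (H i *ᵥ (x - θs))) k s θ0 - θs‖ ^ 2 ≤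
        ‖θ0 - θs‖ ^ 2) :=
  sgd_linearized_stability_general hn g H hH Hbar hHbar η M hMdef hM lam hlam θ0 θs
end

section
/- Let (Ω, F, P) be a probability space, let H_0 ⊇ H_1 ⊇ H_2 ⊇ ⋯ be a decreasing sequence of events, let (R_k)_{k≥1} be nonnegative integrable random variables, let ε > 0, and let (b_k)_{k≥2} be nonnegative reals such that E[R_k 1_{H_{k−1}}] ≤ E[R_{k−1} 1_{H_{k−2}}] − ε P(H_{k−2} \ H_{k−1}) + b_k for all k ≥ 2. Then for every k ≥ 2, ∑_{l=2}^{k} P(H_{l−2} \ H_{l−1}) ≤ (1/ε)( E[R_1 1_{H_0}] + ∑_{l=2}^{k} b_l ), and consequently P(H_{k−1}) ≥ P(H_0) − (1/ε)( E[R_1 1_{H_0}] + ∑_{l=2}^{∞} b_l ) whenever the series ∑ b_l converges. -/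
/-!
Summing the recurrence telescopes the integrals `I k = ∫ in H (k - 1), R k`; as `I k ≥ 0`, this
leaves `ε ∑ P(H (l - 2) \ H (l - 1)) ≤ I 1 + ∑ b l`. By subadditivity the escape probabilities
dominate the loss `P(H 0) - P(H (k - 1))`.
-/

open MeasureTheory Finset

theorem le_add_sum_Icc_of_le_add {f c : ℕ → ℝ} {m n : ℕ} (hmn : m ≤ n)
    (h : ∀ k, m < k → f k ≤ f (k - 1) + c k) :
    f n ≤ f m + ∑ l ∈ Icc (m + 1) n, c l := by
  induction n, hmn using Nat.le_induction with
  | base => simp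
  | succ n hmn ih =>
    rw [sum_Icc_succ_top (by omega)]
    have := h (n + 1) (by omega)
    rw [Nat.add_sub_cancel] at this
    linarith

theorem sum_Icc_le_tsum_nat_add {f : ℕ → ℝ} (m n : ℕ) (hf : ∀ i, 0 ≤ f (i + m))
    (hsum : Summable fun i => f (i + m)) :
    ∑ l ∈ Icc m n, f l ≤ ∑' i, f (i + m) := by
  rw [← Ico_add_one_right_eq_Icc, sum_Ico_eq_sum_range]
  simp_rw [add_comm m]
  exact hsum.sum_le_tsum _ fun i _ => hf i

theorem telescoping_escape_probability_general {Ω : Type*} {m0 : MeasurableSpace Ω}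
    (μ : Measure Ω) [IsProbabilityMeasure μ]
    (H : ℕ → Set Ω)
    (R : ℕ → Ω → ℝ) (hRnn : ∀ k ω, 0 ≤ R k ω)
    (ε : ℝ) (hε : 0 < ε)
    (b : ℕ → ℝ) (hbnn : ∀ k, 0 ≤ b k)
    (hrec : ∀ k, 2 ≤ k →
      ∫ ω in H (k - 1), R k ω ∂μ ≤
        (∫ ω in H (k - 2), R (k - 1) ω ∂μ) -
          ε * (μ (H (k - 2) \ H (k - 1))).toReal + b k) :
    (∀ k, 2 ≤ k →
      ∑ l ∈ Finset.Icc 2 k, (μ (H (l - 2) \ H (l - 1))).toReal ≤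
        (1 / ε) * ((∫ ω in H 0, R 1 ω ∂μ) + ∑ l ∈ Finset.Icc 2 k, b l)) ∧
    ((Summable fun l : ℕ => b (l + 2)) → ∀ k, 1 ≤ k →
      (μ (H (k - 1))).toReal ≥
        (μ (H 0)).toReal -
          (1 / ε) * ((∫ ω in H 0, R 1 ω ∂μ) + ∑' l : ℕ, b (l + 2))) := by
  set d : ℕ → ℝ := fun l => μ.real (H (l - 2) \ H (l - 1))
  set I : ℕ → ℝ := fun k => ∫ ω in H (k - 1), R k ω ∂μ
  have escape_le : ∀ k, 1 ≤ k → ∑ l ∈ Icc 2 k, d l ≤ (1 / ε) * (I 1 + ∑ l ∈ Icc 2 k, b l) := by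
    intro k hk
    have htel : I k ≤ I 1 + ∑ l ∈ Icc 2 k, (b l - ε * d l) :=
      le_add_sum_Icc_of_le_add hk fun l hl => by
        have := hrec l hl
        simp only [I, d, Nat.sub_sub, Nat.reduceAdd, measureReal_def] at this ⊢
        linarith
    rw [sum_sub_distrib, ← mul_sum] at htel
    have hIk : 0 ≤ I k := integral_nonneg (hRnn k)
    rw [one_div, ← div_eq_inv_mul, le_div_iff₀ hε]
    linarith
  refine ⟨fun k hk => escape_le k (by omega), fun hb k hk => ?_⟩
  have hlost : -μ.real (H (k - 1)) ≤ -μ.real (H 0) + ∑ l ∈ Icc 2 k, d l :=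
    le_add_sum_Icc_of_le_add (f := fun k => -μ.real (H (k - 1))) hk fun l hl => by
      have := le_measureReal_sdiff (μ := μ) (s₁ := H (l - 2)) (s₂ := H (l - 1))
      simp only [d, Nat.sub_sub, Nat.reduceAdd]
      linarith
  have hb_le : ∑ l ∈ Icc 2 k, b l ≤ ∑' l, b (l + 2) :=
    sum_Icc_le_tsum_nat_add 2 k (fun _ => hbnn _) hb
  have hbound : (1 / ε) * (I 1 + ∑ l ∈ Icc 2 k, b l) ≤ (1 / ε) * (I 1 + ∑' l, b (l + 2)) := by
    gcongr
  have hescape := escape_le k hk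
  show μ.real (H 0) - _ ≤ μ.real (H (k - 1))
  linarith

/-- telescoping bound for the escape probabilities. If
`H 0 ⊇ H 1 ⊇ ⋯` are events, `R k ≥ 0` are integrable, `ε > 0`, `b k ≥ 0`, and
`E[R k 1_{H (k−1)}] ≤ E[R (k−1) 1_{H (k−2)}] − ε P(H (k−2) \ H (k−1)) + b k`
for all `k ≥ 2`, then `∑_{l=2}^k P(H (l−2) \ H (l−1)) ≤
(1/ε)(E[R 1 1_{H 0}] + ∑_{l=2}^k b l)`, and consequently, whenever `∑ b l`
converges, `P(H (k−1)) ≥ P(H 0) − (1/ε)(E[R 1 1_{H 0}] + ∑_{l=2}^∞ b l)`. -/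
theorem telescoping_escape_probability {Ω : Type*} {m0 : MeasurableSpace Ω}
    (μ : Measure Ω) [IsProbabilityMeasure μ]
    (H : ℕ → Set Ω) (hHmeas : ∀ k, MeasurableSet (H k))
    (hHmono : ∀ k, H (k + 1) ⊆ H k)
    (R : ℕ → Ω → ℝ) (hRnn : ∀ k ω, 0 ≤ R k ω)
    (hRint : ∀ k, Integrable (R k) μ)
    (ε : ℝ) (hε : 0 < ε)
    (b : ℕ → ℝ) (hbnn : ∀ k, 0 ≤ b k)
    (hrec : ∀ k, 2 ≤ k →
      ∫ ω in H (k - 1), R k ω ∂μ ≤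
        (∫ ω in H (k - 2), R (k - 1) ω ∂μ) -
          ε * (μ (H (k - 2) \ H (k - 1))).toReal + b k) :
    (∀ k, 2 ≤ k →
      ∑ l ∈ Finset.Icc 2 k, (μ (H (l - 2) \ H (l - 1))).toReal ≤
        (1 / ε) * ((∫ ω in H 0, R 1 ω ∂μ) + ∑ l ∈ Finset.Icc 2 k, b l)) ∧
    ((Summable fun l : ℕ => b (l + 2)) → ∀ k, 1 ≤ k →
      (μ (H (k - 1))).toReal ≥
        (μ (H 0)).toReal -
          (1 / ε) * ((∫ ω in H 0, R 1 ω ∂μ) + ∑' l : ℕ, b (l + 2))) :=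
  telescoping_escape_probability_general (m0 := m0) μ H R hRnn ε hε b hbnn hrec
end
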